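/- For each Bernoulli factor, the modulus of its characteristic function admits a Gaussian-type bound on the central lobe: for p \in [0,1], w > 0, and |\omega| \le \pi/w, one has |(1-p) + p e^{i\omega w}| \le exp(-(2/\pi^2) p(1-p) w^2 \omega^2). -/

import Mathlib

/-!
Writing `θ = ωw`, one has `|(1-p) + p e^{iθ}|² = 1 - 2p(1-p)(1 - cos θ) ≤ exp(-2p(1-p)(1 - cos θ))`
by `1 + x ≤ eˣ`, and on `|θ| ≤ π` the chord bound `1 - cos θ ≥ 2θ²/π²` turns this into the
Gaussian bound.
-/

open Real

lemma le_exp_neg_of_sq_le_one_sub {a x : ℝ} (h : a ^ 2 ≤ 1 - 2 * x) :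
    a ≤ exp (-x) := by
  have hsq : a ^ 2 ≤ exp (-x) ^ 2 := by
    rw [sq (exp _), ← exp_add]
    linarith [add_one_le_exp (-x + -x)]
  exact le_of_sq_le_sq hsq (exp_pos _).le

lemma norm_one_sub_add_mul_exp_mul_I_sq (p θ : ℝ) :
    ‖(1 - p : ℂ) + p * Complex.exp (θ * Complex.I)‖ ^ 2
      = 1 - 2 * (p * (1 - p)) * (1 - cos θ) := by
  rw [Complex.exp_mul_I, ← Complex.ofReal_cos, ← Complex.ofReal_sin, Complex.sq_norm,
    Complex.normSq_apply]
  simp only [Complex.add_re, Complex.add_im, Complex.mul_re, Complex.mul_im, Complex.sub_re,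
    Complex.sub_im, Complex.one_re, Complex.one_im, Complex.ofReal_re, Complex.ofReal_im,
    Complex.I_re, Complex.I_im]
  linear_combination p ^ 2 * sin_sq_add_cos_sq θ

lemma norm_one_sub_add_mul_exp_mul_I_le (p θ : ℝ) :
    ‖(1 - p : ℂ) + p * Complex.exp (θ * Complex.I)‖
      ≤ exp (-(p * (1 - p) * (1 - cos θ))) :=
  le_exp_neg_of_sq_le_one_sub
    (by rw [norm_one_sub_add_mul_exp_mul_I_sq]; linarith)

/-- Gaussian-type bound for the modulus of a Bernoulli characteristic function
on the central lobe: for `p ∈ [0,1]`, `w > 0` and `|ω| ≤ π/w`,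
`|(1-p) + p e^{iωw}| ≤ exp(-(2/π²) p(1-p) w² ω²)`. -/
theorem bernoulli_charFun_gaussian_bound (p w ω : ℝ)
    (hp0 : 0 ≤ p) (hp1 : p ≤ 1) (hw : 0 < w)
    (hω : |ω| ≤ Real.pi / w) :
    ‖(1 - p : ℂ) + p * Complex.exp (Complex.I * ω * w)‖
      ≤ Real.exp (-(2 / Real.pi ^ 2) * (p * (1 - p)) * w ^ 2 * ω ^ 2) := by
  have hθ : |ω * w| ≤ π := by
    rw [abs_mul, abs_of_pos hw, ← le_div_iff₀ hw]
    exact hω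
  have hvar : 0 ≤ p * (1 - p) := mul_nonneg hp0 (sub_nonneg.mpr hp1)
  have hchord : 2 / π ^ 2 * (ω * w) ^ 2 ≤ 1 - cos (ω * w) := by
    linarith [cos_le_one_sub_mul_cos_sq hθ]
  have hexp : Complex.I * ω * w = ((ω * w : ℝ) : ℂ) * Complex.I := by push_cast; ring
  calc ‖(1 - p : ℂ) + p * Complex.exp (Complex.I * ω * w)‖
      ≤ exp (-(p * (1 - p) * (1 - cos (ω * w)))) := by
        rw [hexp]; exact norm_one_sub_add_mul_exp_mul_I_le p (ω * w)
    _ ≤ exp (-(2 / π ^ 2) * (p * (1 - p)) * w ^ 2 * ω ^ 2) := by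
        gcongr
        linear_combination mul_le_mul_of_nonneg_left hchord hvar
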